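/- The maximal solution y is defined on all of ℝ and satisfies |y(u)| ≤ 1 for every u ∈ ℝ (the classical oscillation has bounded amplitude and exists globally). -/

import Mathlib

/-!
For `p = (y, y')` the energy `y⁴ + y'²` is a first integral of `y'' = -2y³`, equal to `1` at
`u = 0`, so an orbit through `(0, 1)` stays in the box `|y|, |y'| ≤ 1`. To obtain a global
solution, clip the vector field outside `[-2, 2]²`: the clipped field is bounded and globally
Lipschitz, so Picard–Lindelöf gives solutions on every `[-n, n]`, and uniqueness glues them.
Where the energy is `< 4` the clipped field is the true one, so along the glued solution the
energy is locally constant on that open set of times; by connectedness of `ℝ` it is identically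
`1`, hence the solution never leaves the box and solves the original equation.
-/

open Set Topology
open scoped NNReal

section Calculus

variable {E F : Type*} [NormedAddCommGroup E] [NormedSpace ℝ E]
  [NormedAddCommGroup F] [NormedSpace ℝ F]

theorem HasDerivAt.fst {f : ℝ → E × F} {f' : E × F} {t : ℝ} (h : HasDerivAt f f' t) :
    HasDerivAt (fun s => (f s).1) f'.1 t :=
  (hasFDerivAt_fst (𝕜 := ℝ) (p := f t)).comp_hasDerivAt t h

theorem HasDerivAt.snd {f : ℝ → E × F} {f' : E × F} {t : ℝ} (h : HasDerivAt f f' t) :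
    HasDerivAt (fun s => (f s).2) f'.2 t :=
  (hasFDerivAt_snd (𝕜 := ℝ) (p := f t)).comp_hasDerivAt t h

theorem eq_of_deriv_eq_zero_on_preimage {f : ℝ → E} {U : Set E} {c : E} (hU : IsOpen U)
    (hc : c ∈ U) (hf : Differentiable ℝ f) (hf' : ∀ t, f t ∈ U → deriv f t = 0) {t₀ : ℝ}
    (h₀ : f t₀ = c) (t : ℝ) : f t = c := by
  have hopen : IsOpen (f ⁻¹' U ∩ f ⁻¹' {c}) :=
    (hU.preimage hf.continuous).isOpen_inter_preimage_of_deriv_eq_zero hf.differentiableOn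
      (fun s hs => hf' s hs) {c}
  have hsub : f ⁻¹' {c} ⊆ f ⁻¹' U := fun s (hs : f s = c) => show f s ∈ U from hs ▸ hc
  have hclopen : IsClopen (f ⁻¹' {c}) :=
    ⟨isClosed_singleton.preimage hf.continuous, inter_eq_right.2 hsub ▸ hopen⟩
  exact (hclopen.eq_univ ⟨t₀, h₀⟩ ▸ mem_univ t : t ∈ f ⁻¹' {c})

end Calculus

section GlobalExistence

variable {E : Type*} [NormedAddCommGroup E] [NormedSpace ℝ E] [CompleteSpace E]
  {w : E → E} {K L : ℝ≥0}

theorem exists_forall_mem_Ioo_hasDerivAt_of_lipschitzWith_of_norm_le (hw : LipschitzWith K w)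
    (hL : ∀ x, ‖w x‖ ≤ L) (x₀ : E) (T : ℝ≥0) :
    ∃ α : ℝ → E, α 0 = x₀ ∧ ∀ t ∈ Ioo (-T : ℝ) T, HasDerivAt α (w (α t)) t := by
  have hpl : IsPicardLindelof (fun _ => w) (⟨0, by simp⟩ : Icc (-T : ℝ) T) x₀ (L * T) 0 L K :=
    { lipschitzOnWith := fun _ _ => hw.lipschitzOnWith
      continuousOn := fun _ _ => continuousOn_const
      norm_le := fun _ _ x _ => hL x
      mul_max_le := by simp }
  obtain ⟨α, hα₀, hα⟩ := hpl.exists_eq_forall_mem_Icc_hasDerivWithinAt₀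
  exact ⟨α, hα₀, fun t ht => (hα t (Ioo_subset_Icc_self ht)).hasDerivAt (Icc_mem_nhds ht.1 ht.2)⟩

theorem exists_isIntegralCurve_of_lipschitzWith_of_norm_le (hw : LipschitzWith K w)
    (hL : ∀ x, ‖w x‖ ≤ L) (x₀ : E) :
    ∃ γ : ℝ → E, γ 0 = x₀ ∧ IsIntegralCurve γ (fun _ => w) := by
  choose α hα₀ hα using
    fun n : ℕ => exists_forall_mem_Ioo_hasDerivAt_of_lipschitzWith_of_norm_le hw hL x₀ n
  simp only [NNReal.coe_natCast] at hα
  have hagree : ∀ m n : ℕ, ∀ t : ℝ, |t| < m → |t| < n → α m t = α n t := by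
    intro m n t hm hn
    set T := min (m : ℝ) n
    have hsol : ∀ k : ℕ, T ≤ k →
        ∀ s ∈ Ioo (-T) T, HasDerivAt (α k) (w (α k s)) s ∧ α k s ∈ univ :=
      fun k hk s hs => ⟨hα k s ⟨by linarith [hs.1], by linarith [hs.2]⟩, trivial⟩
    have htT : |t| < T := lt_min hm hn
    have h0T : (0 : ℝ) ∈ Ioo (-T) T := abs_lt.1 (by simpa using (abs_nonneg t).trans_lt htT)
    exact ODE_solution_unique_of_mem_Ioo (v := fun _ => w) (fun _ _ => hw.lipschitzOnWith) h0T
      (hsol m (min_le_left _ _)) (hsol n (min_le_right _ _)) (by rw [hα₀, hα₀]) (abs_lt.1 htT)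
  refine ⟨fun t => α (⌈|t|⌉₊ + 1) t, hα₀ _, fun t => ?_⟩
  have hlt : ∀ s : ℝ, |s| < (⌈|s|⌉₊ + 1 : ℕ) := fun s => by
    push_cast; linarith [Nat.le_ceil |s|]
  have heq : (fun s => α (⌈|s|⌉₊ + 1) s) =ᶠ[𝓝 t] α (⌈|t|⌉₊ + 1) := by
    filter_upwards [Ioo_mem_nhds (abs_lt.1 (hlt t)).1 (abs_lt.1 (hlt t)).2] with s hs
    exact hagree _ _ s (hlt s) (abs_lt.2 hs)
  exact (hα _ t (abs_lt.1 (hlt t))).congr_of_eventuallyEq heq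

end GlobalExistence

namespace LemniscateSine

def clip (x : ℝ) : ℝ := max (-2) (min 2 x)

theorem clip_of_abs_le {x : ℝ} (hx : |x| ≤ 2) : clip x = x := by
  rw [clip, min_eq_right (abs_le.1 hx).2, max_eq_right (abs_le.1 hx).1]

theorem abs_clip_le (x : ℝ) : |clip x| ≤ 2 :=
  abs_le.2 ⟨le_max_left _ _, max_le (by norm_num) (min_le_left _ _)⟩

theorem lipschitzWith_clip : LipschitzWith 1 clip :=
  (LipschitzWith.id.const_min 2).const_max (-2)

def truncatedField (p : ℝ × ℝ) : ℝ × ℝ := (clip p.2, -2 * clip p.1 ^ 3)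

theorem truncatedField_of_abs_le {p : ℝ × ℝ} (h₁ : |p.1| ≤ 2) (h₂ : |p.2| ≤ 2) :
    truncatedField p = (p.2, -2 * p.1 ^ 3) := by
  rw [truncatedField, clip_of_abs_le h₁, clip_of_abs_le h₂]

theorem norm_truncatedField_le (p : ℝ × ℝ) : ‖truncatedField p‖ ≤ (16 : ℝ≥0) := by
  have h₁ := abs_clip_le p.1
  have h₂ := abs_clip_le p.2
  have h₃ : |clip p.1| ^ 3 ≤ 2 ^ 3 := pow_le_pow_left₀ (abs_nonneg _) h₁ 3
  simp only [truncatedField, Prod.norm_def, Real.norm_eq_abs, abs_mul, abs_pow, NNReal.coe_ofNat]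
  norm_num at h₃ ⊢
  constructor <;> linarith

theorem lipschitzOnWith_neg_two_mul_pow_three :
    LipschitzOnWith 24 (fun x : ℝ => -2 * x ^ 3) (Icc (-2) 2) := by
  refine (convex_Icc _ _).lipschitzOnWith_of_nnnorm_hasDerivWithin_le
    (fun x _ => ((hasDerivAt_pow 3 x).const_mul (-2)).hasDerivWithinAt) fun x hx => ?_
  rw [← NNReal.coe_le_coe, coe_nnnorm, Real.norm_eq_abs]
  have : x ^ 2 ≤ 4 := by nlinarith [hx.1, hx.2]
  push_cast
  rw [abs_le]; constructor <;> nlinarith [sq_nonneg x]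

theorem lipschitzWith_truncatedField : LipschitzWith 24 truncatedField := by
  have h₁ : LipschitzWith 1 fun p : ℝ × ℝ => clip p.2 := by
    simpa [Function.comp_def] using lipschitzWith_clip.comp LipschitzWith.prod_snd
  have h₂ : LipschitzWith 24 fun p : ℝ × ℝ => -2 * clip p.1 ^ 3 := by
    have := lipschitzOnWith_neg_two_mul_pow_three.comp
      (lipschitzWith_clip.comp (LipschitzWith.prod_fst (α := ℝ) (β := ℝ))).lipschitzOnWith
      (s := univ) fun p _ => abs_le.1 (abs_clip_le p.1)
    simpa [Function.comp_def] using this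
  exact (h₁.prodMk h₂).weaken (by norm_num)

def energy (p : ℝ × ℝ) : ℝ := p.1 ^ 4 + p.2 ^ 2

theorem abs_le_two_of_energy_lt {p : ℝ × ℝ} (h : energy p < 4) : |p.1| ≤ 2 ∧ |p.2| ≤ 2 := by
  unfold energy at h
  constructor <;> rw [abs_le] <;> constructor <;>
    nlinarith [sq_nonneg p.1, sq_nonneg p.2, sq_nonneg (p.1 ^ 2 - 2)]

theorem abs_fst_le_one_of_energy_eq_one {p : ℝ × ℝ} (h : energy p = 1) : |p.1| ≤ 1 := by
  unfold energy at h
  rw [abs_le]; constructor <;> nlinarith [sq_nonneg p.1, sq_nonneg p.2, sq_nonneg (p.1 ^ 2 - 1)]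

theorem differentiable_energy : Differentiable ℝ energy := by
  unfold energy; fun_prop

theorem hasDerivAt_energy_comp {γ : ℝ → ℝ × ℝ} {t : ℝ}
    (hγ : HasDerivAt γ (truncatedField (γ t)) t) (h : energy (γ t) < 4) :
    HasDerivAt (fun s => energy (γ s)) 0 t := by
  obtain ⟨h₁, h₂⟩ := abs_le_two_of_energy_lt h
  have := (hγ.fst.fun_pow 4).fun_add (hγ.snd.fun_pow 2)
  rw [truncatedField_of_abs_le h₁ h₂] at this
  refine this.congr_deriv ?_
  norm_num
  ring

theorem energy_eq_one {γ : ℝ → ℝ × ℝ} (hγ : IsIntegralCurve γ fun _ => truncatedField)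
    (h₀ : γ 0 = (0, 1)) (t : ℝ) : energy (γ t) = 1 :=
  eq_of_deriv_eq_zero_on_preimage isOpen_Iio (by norm_num : (1 : ℝ) ∈ Iio 4)
    (differentiable_energy.comp fun s => (hγ s).differentiableAt)
    (fun s hs => (hasDerivAt_energy_comp (hγ s) hs).deriv) (t₀ := 0) (by simp [h₀, energy]) t

end LemniscateSine

open LemniscateSine

theorem sn_global_and_bounded :
    ∃ y yd : ℝ → ℝ,
      (∀ u : ℝ, HasDerivAt y (yd u) u) ∧
      (∀ u : ℝ, HasDerivAt yd (-2 * y u ^ 3) u) ∧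
      y 0 = 0 ∧ yd 0 = 1 ∧ ∀ u : ℝ, |y u| ≤ 1 := by
  obtain ⟨γ, hγ₀, hγ⟩ :=
    exists_isIntegralCurve_of_lipschitzWith_of_norm_le lipschitzWith_truncatedField
      norm_truncatedField_le ((0, 1) : ℝ × ℝ)
  have hbound : ∀ u, |(γ u).1| ≤ 1 := fun u =>
    abs_fst_le_one_of_energy_eq_one (energy_eq_one hγ hγ₀ u)
  have hfield : ∀ u, truncatedField (γ u) = ((γ u).2, -2 * (γ u).1 ^ 3) := fun u =>
    have ⟨h₁, h₂⟩ := abs_le_two_of_energy_lt (by rw [energy_eq_one hγ hγ₀ u]; norm_num)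
    truncatedField_of_abs_le h₁ h₂
  refine ⟨fun u => (γ u).1, fun u => (γ u).2, fun u => ?_, fun u => ?_, by simp [hγ₀],
    by simp [hγ₀], hbound⟩
  · simpa [hfield u] using (hγ u).fst
  · simpa [hfield u] using (hγ u).snd
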